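/- Let A and B be finite index types. Let H be a real symmetric matrix indexed by A all of whose entries are ≤ 0, let σ be a real symmetric positive semidefinite matrix indexed by A × B, and let ρ be a real matrix indexed by A such that (Tr_B σ)_{s,t} ≥ ρ_{s,t} for all s, t ∈ A (entrywise inequality). Then Tr(H ρ) ≥ Tr((H ⊗ I_B) σ). -/

import Mathlib

open Matrix
open scoped Kronecker

/-- The partial trace over the second tensor factor:
(Tr_B σ)_{s,t} = ∑_{k ∈ B} σ_{(s,k),(t,k)}. -/
def partialTraceB {A B : Type*} [Fintype B] (σ : Matrix (A × B) (A × B) ℝ) :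
    Matrix A A ℝ :=
  fun s t => ∑ k : B, σ (s, k) (t, k)

namespace Matrix

theorem trace_mul_eq_sum_sum {m n R : Type*} [Fintype m] [Fintype n]
    [NonUnitalNonAssocSemiring R] (M : Matrix m n R) (N : Matrix n m R) :
    (M * N).trace = ∑ i, ∑ j, M i j * N j i :=
  rfl

theorem trace_mul_le_trace_mul_of_nonpos {m n R : Type*} [Fintype m] [Fintype n]
    [Ring R] [PartialOrder R] [IsOrderedRing R]
    {M : Matrix m n R} {N N' : Matrix n m R}
    (hM : ∀ i j, M i j ≤ 0) (hN : ∀ i j, N i j ≤ N' i j) :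
    (M * N').trace ≤ (M * N).trace := by
  simp only [trace_mul_eq_sum_sum]
  refine Finset.sum_le_sum fun i _ => Finset.sum_le_sum fun j _ => ?_
  exact mul_le_mul_of_nonpos_left (hN j i) (hM i j)

end Matrix

theorem trace_kronecker_one_mul_eq_trace_mul_partialTraceB {A B : Type*}
    [Fintype A] [Fintype B] [DecidableEq B]
    (M : Matrix A A ℝ) (σ : Matrix (A × B) (A × B) ℝ) :
    ((M ⊗ₖ (1 : Matrix B B ℝ)) * σ).trace = (M * partialTraceB σ).trace := by
  simp only [trace_mul_eq_sum_sum, partialTraceB, Fintype.sum_prod_type, kroneckerMap_apply,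
    one_apply, mul_ite, mul_one, mul_zero, ite_mul, zero_mul, Finset.sum_ite_eq,
    Finset.mem_univ, if_true, Finset.mul_sum]
  exact Finset.sum_congr rfl fun s _ => Finset.sum_comm

theorem trace_mul_ge_of_entrywise_dominated_general (A B : Type*)
    [Fintype A] [Fintype B] [DecidableEq B]
    (H : Matrix A A ℝ) (hHle : ∀ s t, H s t ≤ 0)
    (σ : Matrix (A × B) (A × B) ℝ)
    (ρ : Matrix A A ℝ) (hρ : ∀ s t, ρ s t ≤ partialTraceB σ s t) :
    (H * ρ).trace ≥ ((H ⊗ₖ (1 : Matrix B B ℝ)) * σ).trace := by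
  rw [ge_iff_le, trace_kronecker_one_mul_eq_trace_mul_partialTraceB]
  exact trace_mul_le_trace_mul_of_nonpos hHle hρ

/-- if H is real symmetric with all entries ≤ 0, σ is real symmetric PSD
on A × B, and Tr_B(σ) ≥ ρ entrywise, then Tr(Hρ) ≥ Tr((H ⊗ I_B)σ). -/
theorem trace_mul_ge_of_entrywise_dominated (A B : Type*)
    [Fintype A] [Fintype B] [DecidableEq B]
    (H : Matrix A A ℝ) (hHsymm : H.IsHermitian) (hHle : ∀ s t, H s t ≤ 0)
    (σ : Matrix (A × B) (A × B) ℝ) (hσ : σ.PosSemidef)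
    (ρ : Matrix A A ℝ) (hρ : ∀ s t, ρ s t ≤ partialTraceB σ s t) :
    (H * ρ).trace ≥ ((H ⊗ₖ (1 : Matrix B B ℝ)) * σ).trace :=
  trace_mul_ge_of_entrywise_dominated_general A B H hHle σ ρ hρ
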